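/- The 3×3 matrices Γ(X) = [[0,-2,0],[0,0,1],[0,0,0]], Γ(H) = [[2,4h,-h²],[0,0,-2h],[0,0,-2]], Γ(Y) = [[2h,3h²,-h³],[-1,0,-h²],[0,2,-2h]] satisfy the U_h(sl₂) relations: [Γ(H),Γ(X)] = 2 sinh(hΓ(X))/h, [Γ(H),Γ(Y)] = -Γ(Y)cosh(hΓ(X)) - cosh(hΓ(X))Γ(Y), and [Γ(X),Γ(Y)] = Γ(H). -/

import Mathlib

open Matrix

set_option maxHeartbeats 1000000 in
/-- The 3×3 adjoint-representation matrices of `U_h(sl₂)` satisfy the Jordanian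
relations. Since `Γ(X)³ = 0`, `sinh(hΓ(X)) = hΓ(X)` and
`cosh(hΓ(X)) = I + (h²/2)Γ(X)²`, so the relations are matrix identities. -/
theorem jordanian_adjoint_rep {R : Type*} [CommRing R] [Algebra ℚ R] (h : R) :
    let ΓX : Matrix (Fin 3) (Fin 3) R := !![0, -2, 0; 0, 0, 1; 0, 0, 0]
    let ΓH : Matrix (Fin 3) (Fin 3) R := !![2, 4*h, -h^2; 0, 0, -2*h; 0, 0, -2]
    let ΓY : Matrix (Fin 3) (Fin 3) R := !![2*h, 3*h^2, -h^3; -1, 0, -h^2; 0, 2, -2*h]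
    let ch : Matrix (Fin 3) (Fin 3) R := 1 + (algebraMap ℚ R (1/2) * h^2) • (ΓX * ΓX)
    ΓX ^ 3 = 0 ∧
    ΓH * ΓX - ΓX * ΓH = (2 : R) • ΓX ∧
    ΓH * ΓY - ΓY * ΓH = -(ΓY * ch + ch * ΓY) ∧
    ΓX * ΓY - ΓY * ΓX = ΓH := by
  intro ΓX ΓH ΓY ch
  set c : R := algebraMap ℚ R (1/2) with hc
  have h2 : c * 2 = 1 := by
    rw [hc, ← map_ofNat (algebraMap ℚ R) 2, ← RingHom.map_mul, ← map_one (algebraMap ℚ R)]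
    norm_num
  have hch : ch = !![1, 0, -2*c*h^2; 0, 1, 0; 0, 0, 1] := by
    norm_num [ch, ΓX, Matrix.mul_fin_three, Matrix.one_fin_three, Matrix.smul_of,
      Matrix.smul_cons, smul_eq_mul, Matrix.smul_empty, ← Matrix.ext_iff,
      Fin.forall_fin_succ, Matrix.empty_eq]
    ring
  refine ⟨?_, ?_, ?_, ?_⟩
  · rw [pow_succ, pow_two]
    norm_num [ΓX, Matrix.mul_fin_three, ← Matrix.ext_iff, Fin.forall_fin_succ,
      Matrix.empty_eq]
  · simp only [ΓX, ΓH, Matrix.mul_fin_three, Matrix.smul_of, Matrix.smul_cons,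
      smul_eq_mul, Matrix.smul_empty, Matrix.sub_apply]
    ext i j
    fin_cases i <;> fin_cases j <;>
      simp [Matrix.vecHead, Matrix.vecTail] <;> ring
  · rw [hch]
    simp only [ΓX, ΓH, ΓY]
    norm_num [Matrix.mul_fin_three, ← Matrix.ext_iff, Fin.forall_fin_succ,
      Matrix.empty_eq]
    refine ⟨⟨?_, ?_, ?_⟩, ⟨?_, ?_⟩, ?_⟩ <;>
      first
        | ring1
        | linear_combination (2*h^2) * h2
        | linear_combination (-2*h^2) * h2
        | linear_combination (h^2) * h2
        | linear_combination (-h^2) * h2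
  · simp only [ΓX, ΓH, ΓY, Matrix.mul_fin_three]
    ext i j
    fin_cases i <;> fin_cases j <;>
      simp [Matrix.vecHead, Matrix.vecTail] <;> ring
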